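/- arXiv:1711.06455 — 2 statements merged into one kernel-verified Lean document; each statement's English description precedes it below -/
import Mathlib

section
/- (Sherman–Morrison contraction update for Laplacians) Let G be a connected weighted graph, s,t vertices, f = {u,v} an edge with lev_G(f) > 0, and d any vector orthogonal to the all-ones vector. Then the potential differences in the contracted graph satisfy b_{st}^T L_{G/f}^+ d = b_{st}^T L_G^+ d - (b_{st}^T L_G^+ b_f)(b_f^T L_G^+ d) / (r_f * lev_G(f)), where on the left-hand side b_{st} and d are interpreted in G/f by merging the coordinates of u and v. -/
open Matrix

/-- The signed indicator vector `χ_x - χ_y`. -/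
def incv {V : Type*} [DecidableEq V] (x y : V) : V → ℝ := fun v =>
  (if v = x then 1 else 0) - (if v = y then 1 else 0)

/-- Weighted Laplacian of the multigraph whose edge `e` has endpoints `a e`, `b e`
and conductance `c e`. -/
noncomputable def lapM {V E : Type*} [DecidableEq V] [Fintype E]
    (a b : E → V) (c : E → ℝ) : Matrix V V ℝ :=
  ∑ e, c e • Matrix.vecMulVec (incv (a e) (b e)) (incv (a e) (b e))

/-- `M` is the Moore–Penrose pseudoinverse of `L`. -/
def IsMPInv {V : Type*} [Fintype V] (L M : Matrix V V ℝ) : Prop :=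
  L * M * L = L ∧ M * L * M = M ∧ (L * M)ᵀ = L * M ∧ (M * L)ᵀ = M * L

/-- Connectivity of a weighted graph, encoded as: the kernel of its Laplacian
consists exactly of the constant vectors. -/
def LapConnected {V : Type*} [Fintype V] (L : Matrix V V ℝ) : Prop :=
  ∀ x : V → ℝ, L.mulVec x = 0 → ∃ t : ℝ, ∀ v, x v = t

/-! With `κ = b_fᵀL⁺d / b_fᵀL⁺b_f`, the potential `ψ = L⁺d - κ L⁺b_f` satisfies `Lψ = d - κ b_f`
and `b_fᵀψ = 0`, i.e. `ψ u = ψ v`, so it descends to a potential `φ` on `G/f`. With `P` the matrix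
merging coordinates along `π`, `L_{G/f} = P L Pᵀ` (the edge `f` becomes a loop), hence
`L_{G/f} φ = P (d - κ b_f) = P d`. As `G/f` is connected, `L_{G/f}⁺ P d` differs from `φ` by a
constant, so its potential differences are those of `ψ`, which is the right-hand side. -/

section Laplacian

variable {V E : Type*} [DecidableEq V] [Fintype E]

lemma incv_self (x : V) : incv x x = 0 := by
  funext v
  simp [incv]

lemma incv_eq_single_sub_single (x y : V) : incv x y = Pi.single x 1 - Pi.single y 1 := by
  funext v
  simp [incv, Pi.single_apply]

lemma lapM_transpose (a b : E → V) (c : E → ℝ) : (lapM a b c)ᵀ = lapM a b c := by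
  simp only [lapM, transpose_sum, transpose_smul, transpose_vecMulVec]

lemma lapM_congr {a b : E → V} {c c' : E → ℝ} (h : ∀ e, a e ≠ b e → c e = c' e) :
    lapM a b c = lapM a b c' := by
  refine Finset.sum_congr rfl fun e _ => ?_
  by_cases hab : a e = b e
  · simp [hab, incv_self]
  · rw [h e hab]

variable [Fintype V]

lemma incv_dotProduct (x y : V) (z : V → ℝ) : incv x y ⬝ᵥ z = z x - z y := by
  simp [incv, dotProduct, sub_mul, Finset.sum_sub_distrib, ite_mul]

lemma sum_incv (x y : V) : ∑ v, incv x y v = 0 := by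
  simp [incv, Finset.sum_sub_distrib]

lemma lapM_mulVec (a b : E → V) (c : E → ℝ) (x : V → ℝ) :
    lapM a b c *ᵥ x = ∑ e, (c e * (incv (a e) (b e) ⬝ᵥ x)) • incv (a e) (b e) := by
  simp only [lapM, Matrix.sum_mulVec, smul_mulVec, vecMulVec_mulVec, op_smul_eq_smul, smul_smul]

lemma sum_lapM_mulVec (a b : E → V) (c : E → ℝ) (x : V → ℝ) : ∑ v, (lapM a b c *ᵥ x) v = 0 := by
  simp only [lapM_mulVec, Finset.sum_apply, Pi.smul_apply, smul_eq_mul]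
  rw [Finset.sum_comm]
  exact Finset.sum_eq_zero fun e _ => by rw [← Finset.mul_sum, sum_incv, mul_zero]

lemma dotProduct_lapM_mulVec_self (a b : E → V) (c : E → ℝ) (x : V → ℝ) :
    x ⬝ᵥ lapM a b c *ᵥ x = ∑ e, c e * (incv (a e) (b e) ⬝ᵥ x) ^ 2 := by
  rw [lapM_mulVec, dotProduct_sum]
  exact Finset.sum_congr rfl fun e _ => by rw [dotProduct_smul, smul_eq_mul, dotProduct_comm]; ring

lemma lapM_mulVec_eq_zero_of_dotProduct_self {a b : E → V} {c : E → ℝ} (hc : ∀ e, 0 ≤ c e)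
    {x : V → ℝ} (hx : x ⬝ᵥ lapM a b c *ᵥ x = 0) : lapM a b c *ᵥ x = 0 := by
  rw [dotProduct_lapM_mulVec_self, Finset.sum_eq_zero_iff_of_nonneg fun e _ =>
    mul_nonneg (hc e) (sq_nonneg _)] at hx
  rw [lapM_mulVec]
  refine Finset.sum_eq_zero fun e he => ?_
  rcases mul_eq_zero.mp (hx e he) with h | h
  · rw [h, zero_mul, zero_smul]
  · rw [pow_eq_zero_iff two_ne_zero |>.mp h, mul_zero, zero_smul]

end Laplacian

namespace LapConnected

variable {V : Type*} [Fintype V] {L : Matrix V V ℝ}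

lemma eq_zero_of_mulVec_eq_zero (hL : LapConnected L) {z : V → ℝ} (hz : L *ᵥ z = 0)
    (hsum : ∑ v, z v = 0) : z = 0 := by
  obtain ⟨t, ht⟩ := hL z hz
  funext v
  have : Nonempty V := ⟨v⟩
  have hcard : (Fintype.card V : ℝ) * t = 0 := by simpa [ht] using hsum
  rw [ht, Pi.zero_apply]
  exact (mul_eq_zero.mp hcard).resolve_left (Nat.cast_ne_zero.mpr Fintype.card_ne_zero)

lemma sub_eq_sub_of_mulVec_eq (hL : LapConnected L) {x y : V → ℝ} (h : L *ᵥ x = L *ᵥ y)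
    (v w : V) : x v - x w = y v - y w := by
  obtain ⟨t, ht⟩ := hL (x - y) (by rw [mulVec_sub, h, sub_self])
  have hv := ht v
  have hw := ht w
  simp only [Pi.sub_apply] at hv hw
  linarith

lemma mulVec_mulVec_of_isMPInv (hL : LapConnected L) (hLt : Lᵀ = L)
    (hsum : ∀ x, ∑ v, (L *ᵥ x) v = 0) {M : Matrix V V ℝ} (hM : IsMPInv L M) {y : V → ℝ}
    (hy : ∑ v, y v = 0) : L *ᵥ (M *ᵥ y) = y := by
  have hLLM : L * (L * M) = L := by
    have h := congrArg transpose hM.1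
    rwa [transpose_mul, hM.2.2.1, hLt] at h
  refine (sub_eq_zero.mp (hL.eq_zero_of_mulVec_eq_zero ?_ ?_)).symm
  · rw [mulVec_sub, mulVec_mulVec, mulVec_mulVec, mul_assoc, hLLM, sub_self]
  · simp only [Pi.sub_apply, Finset.sum_sub_distrib, hy, hsum, sub_zero]

lemma sub_eq_sub_of_isMPInv (hL : LapConnected L) {M : Matrix V V ℝ} (hM : IsMPInv L M)
    {φ y : V → ℝ} (hφ : L *ᵥ φ = y) (v w : V) : (M *ᵥ y) v - (M *ᵥ y) w = φ v - φ w :=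
  hL.sub_eq_sub_of_mulVec_eq (by rw [← hφ, mulVec_mulVec, mulVec_mulVec, hM.1]) v w

end LapConnected

section Contraction

variable {V W : Type*}

lemma exists_forall_apply_eq_of_fiber_pair {α : Type*} {π : V → W} {x y : V}
    (hπ : ∀ v v', π v = π v' → v = v' ∨ (v = x ∧ v' = y) ∨ (v = y ∧ v' = x)) {ψ : V → α}
    (hψ : ψ x = ψ y) : ∃ φ : W → α, ∀ v, φ (π v) = ψ v := by
  have hψπ : ψ.FactorsThrough π := by
    intro v v' hvv'
    rcases hπ v v' hvv' with rfl | ⟨rfl, rfl⟩ | ⟨rfl, rfl⟩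
    · rfl
    · exact hψ
    · exact hψ.symm
  exact ⟨Function.extend π ψ fun _ => ψ x, hψπ.extend_apply _⟩

variable [DecidableEq W]

lemma lapM_contract {E : Type*} [Fintype E] [DecidableEq E] {a b : E → V} {f : E} {π : V → W}
    (hπf : π (a f) = π (b f)) (c : E → ℝ) :
    lapM (fun e => π (a e)) (fun e => π (b e)) (fun e => if e = f then 0 else c e)
      = lapM (fun e => π (a e)) (fun e => π (b e)) c :=
  lapM_congr fun e he => if_neg fun hef => he (by rw [hef]; exact hπf)

def mergeMat (π : V → W) : Matrix W V ℝ := of fun w v => if π v = w then 1 else 0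

lemma mergeMat_transpose_mulVec [Fintype W] (π : V → W) (φ : W → ℝ) :
    (mergeMat π)ᵀ *ᵥ φ = fun v => φ (π v) := by
  funext v
  simp [mergeMat, mulVec, dotProduct]

variable [Fintype V]

lemma mergeMat_mulVec (π : V → W) (x : V → ℝ) :
    mergeMat π *ᵥ x = fun w => ∑ v, if π v = w then x v else 0 := by
  funext w
  simp [mergeMat, mulVec, dotProduct, ite_mul]

variable [DecidableEq V]

lemma mergeMat_mulVec_incv (π : V → W) (x y : V) :
    mergeMat π *ᵥ incv x y = incv (π x) (π y) := by
  rw [incv_eq_single_sub_single, mulVec_sub, mulVec_single, mulVec_single]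
  funext w
  simp [mergeMat, incv, eq_comm]

variable {E : Type*} [Fintype E]

lemma lapM_comp (π : V → W) (a b : E → V) (c : E → ℝ) :
    lapM (fun e => π (a e)) (fun e => π (b e)) c = mergeMat π * lapM a b c * (mergeMat π)ᵀ := by
  simp only [lapM, Matrix.mul_sum, Matrix.sum_mul, Matrix.mul_smul, Matrix.smul_mul,
    mul_vecMulVec, vecMulVec_mul, vecMul_transpose, mergeMat_mulVec_incv]

lemma LapConnected.lapM_comp [Fintype W] {a b : E → V} {c : E → ℝ}
    (hL : LapConnected (lapM a b c)) (hc : ∀ e, 0 ≤ c e) {π : V → W}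
    (hπ : Function.Surjective π) : LapConnected (lapM (fun e => π (a e)) (fun e => π (b e)) c) := by
  intro x hx
  have hpull : lapM a b c *ᵥ ((mergeMat π)ᵀ *ᵥ x) = 0 := by
    refine lapM_mulVec_eq_zero_of_dotProduct_self hc ?_
    rw [mulVec_transpose, ← dotProduct_mulVec, ← mulVec_transpose, mulVec_mulVec, mulVec_mulVec,
      ← _root_.lapM_comp, hx, dotProduct_zero]
  obtain ⟨t, ht⟩ := hL _ hpull
  refine ⟨t, fun w => ?_⟩
  obtain ⟨v, rfl⟩ := hπ w
  simpa [mergeMat_transpose_mulVec] using ht v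

end Contraction

/-- The contracted graph `G/f` is presented through a surjection `π : V → W` identifying exactly
the endpoints of `f`. -/
theorem sherman_morrison_contraction_update
    {V W E : Type*} [Fintype V] [DecidableEq V] [Fintype W] [DecidableEq W]
    [Fintype E] [DecidableEq E]
    (a b : E → V) (r : E → ℝ) (hr : ∀ e, 0 < r e)
    (hconn : LapConnected (lapM a b fun e => (r e)⁻¹))
    (s t : V) (f : E) (d : V → ℝ) (hd : ∑ v, d v = 0)
    (π : V → W) (hπsurj : Function.Surjective π)
    (hπ : ∀ x y : V, π x = π y ↔ (x = y ∨ (x = a f ∧ y = b f) ∨ (x = b f ∧ y = a f)))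
    (Lp : Matrix V V ℝ) (hLp : IsMPInv (lapM a b fun e => (r e)⁻¹) Lp)
    (LpW : Matrix W W ℝ)
    (hLpW : IsMPInv (lapM (fun e => π (a e)) (fun e => π (b e))
        (fun e => if e = f then 0 else (r e)⁻¹)) LpW)
    (hf : 0 < (incv (a f) (b f) ⬝ᵥ Lp.mulVec (incv (a f) (b f))) / r f) :
    incv (π s) (π t) ⬝ᵥ LpW.mulVec (fun w => ∑ v, if π v = w then d v else 0)
      = incv s t ⬝ᵥ Lp.mulVec d
        - (incv s t ⬝ᵥ Lp.mulVec (incv (a f) (b f)))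
            * (incv (a f) (b f) ⬝ᵥ Lp.mulVec d)
            / (r f * ((incv (a f) (b f) ⬝ᵥ Lp.mulVec (incv (a f) (b f))) / r f)) := by
  set L := lapM a b fun e => (r e)⁻¹
  set bf := incv (a f) (b f)
  set β := bf ⬝ᵥ Lp *ᵥ bf
  set γ := bf ⬝ᵥ Lp *ᵥ d
  have hβ : β ≠ 0 := by
    intro h0
    rw [h0, zero_div] at hf
    exact hf.false
  have hπf : π (a f) = π (b f) := (hπ _ _).2 (Or.inr (Or.inl ⟨rfl, rfl⟩))
  have hpinv : ∀ y : V → ℝ, ∑ v, y v = 0 → L *ᵥ (Lp *ᵥ y) = y := fun y hy =>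
    hconn.mulVec_mulVec_of_isMPInv (lapM_transpose _ _ _) (sum_lapM_mulVec _ _ _) hLp hy
  set ψ := Lp *ᵥ d - (γ / β) • Lp *ᵥ bf with hψ
  have hLψ : L *ᵥ ψ = d - (γ / β) • bf := by
    rw [mulVec_sub, mulVec_smul, hpinv d hd, hpinv bf (sum_incv _ _)]
  have hψf : ψ (a f) = ψ (b f) := by
    have h : bf ⬝ᵥ ψ = 0 := by
      rw [dotProduct_sub, dotProduct_smul, smul_eq_mul, div_mul_cancel₀ _ hβ, sub_self]
    rwa [incv_dotProduct, sub_eq_zero] at h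
  obtain ⟨φ, hφ⟩ := exists_forall_apply_eq_of_fiber_pair (fun v v' => (hπ v v').1) hψf
  rw [lapM_contract hπf] at hLpW
  have hLWφ : lapM (fun e => π (a e)) (fun e => π (b e)) (fun e => (r e)⁻¹) *ᵥ φ
      = mergeMat π *ᵥ d := by
    rw [lapM_comp, ← mulVec_mulVec, ← mulVec_mulVec, mergeMat_transpose_mulVec, funext hφ, hLψ,
      mulVec_sub, mulVec_smul, mergeMat_mulVec_incv, hπf, incv_self, smul_zero, sub_zero]
  have hconnW := hconn.lapM_comp (fun e => (inv_pos.mpr (hr e)).le) hπsurj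
  rw [← mergeMat_mulVec, incv_dotProduct, hconnW.sub_eq_sub_of_isMPInv hLpW hLWφ, hφ, hφ,
    ← incv_dotProduct, hψ, dotProduct_sub, dotProduct_smul, smul_eq_mul,
    mul_div_cancel₀ _ (hr f).ne']
  ring
end

section
/- (Multiplicative control of a randomly updated sequence) Let {v^(k)}_{k≥0} be a random sequence of positive reals generated as follows: given v^(k), adaptively choose nonnegative reals {u_i^(k)}_{i=1}^{ℓ_k} and {w_i^(k)}_{i=1}^{ℓ_k} with sum_i u_i^(k) w_i^(k) ≤ η v^(k); then pick a uniformly random index i* ∈ [ℓ_k] and set v^(k+1) ≤ v^(k) + γ u_{i*}^(k) w_{i*}^(k). Let m_0 = min_k ℓ_k, M_0 = max_k ℓ_k, and let ρ ≥ 1, τ ∈ (0,1). Then with probability at least 1 - 2τ, v^(k') ≤ (2γη)^ρ v^(0) for all k' ≤ m_0 * min( 1/((log(M_0^2/τ)) η^2 γ^2), (1/(200 η γ^2 log(M_0^2/τ))) (τ/M_0^2)^{1/ρ} ). -/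
/-!
Write `x = γ u w / v` for the relative increment of a step: `v` is multiplied by at most `1 + x`,
and `∑ᵢ x ≤ γη =: A` at every history. Call a step a jump when `x > c := 1 / (100 L)`, where
`L = log (M₀² / τ)`. Along a path with `#jumps + 1/20 ≤ ρ` and `∑ min x c ≤ 1/30`, the value grows
by at most `(1 + A) ^ #jumps * exp (1/30) ≤ (2A)^ρ`.

Both bad events are rare by exponential Markov inequalities on the tree of index choices: if the
average of `g h i` over `i < ℓ h` is at most `1 + C / m₀` at every history `h`, the expected
product of `g` along a random path of length `K` is at most `exp (K C / m₀)`, since it factors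
into successive conditional averages. Taking `g = exp (100 L min x c)` and
`g = (1 + exp (L / ρ)) ^ [x > c]`, the two tails are each at most `τ` under the bound on `K`.
-/

open scoped Classical

open Finset Real

theorem Finset.sum_piFinset_const_snoc {α β : Type*} [AddCommMonoid β] {n : ℕ} (s : Finset α)
    (f : (Fin (n + 1) → α) → β) :
    ∑ p ∈ Fintype.piFinset (fun _ ↦ s), f p =
      ∑ q ∈ Fintype.piFinset (fun _ : Fin n ↦ s), ∑ a ∈ s, f (Fin.snoc q a) := by
  have h := filter_piFinset_eq_map_snocEquiv (fun _ : Fin (n + 1) ↦ s) (fun _ ↦ True)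
  simp only [filter_true] at h
  rw [h, sum_map, sum_product_right]
  rfl

theorem List.ofFn_snoc {α : Type*} {n : ℕ} (q : Fin n → α) (a : α) :
    List.ofFn (Fin.snoc q a : Fin (n + 1) → α) = List.ofFn q ++ [a] := by
  rw [List.ofFn_succ_last]
  simp

theorem List.take_ofFn_snoc {α : Type*} {n : ℕ} (q : Fin n → α) (a : α) (k : Fin n) :
    (List.ofFn (Fin.snoc q a : Fin (n + 1) → α)).take k = (List.ofFn q).take k := by
  rw [List.ofFn_snoc, List.take_append_of_le_length (by simp [k.isLt.le])]

theorem List.take_ofFn_snoc_self {α : Type*} {n : ℕ} (q : Fin n → α) (a : α) :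
    (List.ofFn (Fin.snoc q a : Fin (n + 1) → α)).take n = List.ofFn q := by
  rw [List.ofFn_snoc, List.take_left' (by simp)]

theorem le_mul_prod_range_of_le_mul {a f : ℕ → ℝ} {n : ℕ} (hf : ∀ k < n, 0 ≤ f k)
    (ha : ∀ k < n, a (k + 1) ≤ a k * f k) : a n ≤ a 0 * ∏ k ∈ range n, f k := by
  induction n with
  | zero => simp
  | succ n ih =>
    rw [prod_range_succ, ← mul_assoc]
    exact (ha n n.lt_succ_self).trans <| mul_le_mul_of_nonneg_right
      (ih (fun k hk ↦ hf k (by omega)) fun k hk ↦ ha k (by omega)) (hf n n.lt_succ_self)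

theorem sum_range_ite_div_le {M n : ℕ} (hn : n ≤ M) {f : ℕ → ℝ} {B : ℝ} (hB0 : 0 ≤ B)
    (hf : ∑ i ∈ range n, f i ≤ B * n) :
    ∑ i ∈ range M, (if i < n then f i / n else 0) ≤ B := by
  rw [← sum_filter, show (range M).filter (· < n) = range n by ext; simp; omega, ← sum_div]
  exact div_le_of_le_mul₀ (Nat.cast_nonneg _) hB0 hf

theorem exp_le_one_add_mul_of_le_one {t : ℝ} (h0 : 0 ≤ t) (h1 : t ≤ 1) :
    exp t ≤ 1 + (exp 1 - 1) * t := by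
  have h := convexOn_exp.2 (Set.mem_univ (0 : ℝ)) (Set.mem_univ (1 : ℝ)) (sub_nonneg.2 h1) h0
    (sub_add_cancel 1 t)
  simp only [smul_eq_mul, mul_zero, mul_one, zero_add, exp_zero] at h
  linarith

theorem one_add_le_pow_mul_exp_min {y A c : ℝ} (hy : y ≤ A) (hc : 0 ≤ c) :
    1 + y ≤ (1 + A) ^ (if c < y then 1 else 0) * exp (min y c) := by
  split_ifs with hcy
  · rw [pow_one]
    nlinarith [one_le_exp (le_min (hc.trans hcy.le) hc)]
  · rw [pow_zero, one_mul, min_eq_left (not_lt.1 hcy), add_comm]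
    exact add_one_le_exp y

theorem prod_one_add_le_pow_mul_exp {ι : Type*} (s : Finset ι) {y : ι → ℝ} {A c : ℝ}
    (hy0 : ∀ k, 0 ≤ y k) (hyA : ∀ k, y k ≤ A) (hc : 0 ≤ c) :
    ∏ k ∈ s, (1 + y k) ≤ (1 + A) ^ #{k ∈ s | c < y k} * exp (∑ k ∈ s, min (y k) c) := by
  calc ∏ k ∈ s, (1 + y k)
      ≤ ∏ k ∈ s, (1 + A) ^ (if c < y k then 1 else 0) * exp (min (y k) c) :=
        prod_le_prod (fun k _ ↦ by linarith [hy0 k]) fun k _ ↦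
          one_add_le_pow_mul_exp_min (hyA k) hc
    _ = (1 + A) ^ #{k ∈ s | c < y k} * exp (∑ k ∈ s, min (y k) c) := by
        rw [prod_mul_distrib, prod_pow_eq_pow_sum, sum_boole, exp_sum]
        rfl

theorem exp_one_div_thirty_le_rpow {b : ℝ} (hb : 2 ≤ b) :
    exp (1 / 30) ≤ b ^ (1 / 20 : ℝ) := by
  calc exp (1 / 30) ≤ exp (log 2 * (1 / 20)) := by
        gcongr
        linarith [log_two_gt_d9]
    _ = 2 ^ (1 / 20 : ℝ) := by rw [rpow_def_of_pos two_pos]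
    _ ≤ b ^ (1 / 20 : ℝ) := by gcongr

theorem sum_exp_mul_min_le {ι : Type*} (s : Finset ι) {x : ι → ℝ} (hx0 : ∀ i, 0 ≤ x i)
    {θ c : ℝ} (hθ : 0 ≤ θ) (hc : 0 ≤ c) (hθc : θ * c ≤ 1) :
    ∑ i ∈ s, exp (θ * min (x i) c) ≤ #s + (exp 1 - 1) * θ * ∑ i ∈ s, x i := by
  have he : 0 ≤ exp 1 - 1 := by linarith [add_one_le_exp 1]
  calc ∑ i ∈ s, exp (θ * min (x i) c) ≤ ∑ i ∈ s, (1 + (exp 1 - 1) * θ * x i) := by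
        refine sum_le_sum fun i _ ↦ (exp_le_one_add_mul_of_le_one
          (mul_nonneg hθ (le_min (hx0 i) hc)) ?_).trans ?_
        · exact (mul_le_mul_of_nonneg_left (min_le_right _ _) hθ).trans hθc
        · rw [mul_assoc]; gcongr; exact min_le_left _ _
    _ = #s + (exp 1 - 1) * θ * ∑ i ∈ s, x i := by
        rw [sum_add_distrib, mul_sum, sum_const, nsmul_one]

theorem sum_ite_lt_le {ι : Type*} (s : Finset ι) {x : ι → ℝ} (hx0 : ∀ i, 0 ≤ x i)
    {c : ℝ} (hc : 0 < c) {σ : ℝ} (hσ : 0 ≤ σ) :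
    ∑ i ∈ s, (if c < x i then 1 + σ else 1) ≤ #s + σ * ((∑ i ∈ s, x i) / c) := by
  have hcard : c * #{i ∈ s | c < x i} ≤ ∑ i ∈ s, x i := by
    calc c * #{i ∈ s | c < x i} ≤ ∑ i ∈ s with c < x i, x i := by
          rw [mul_comm, ← nsmul_eq_mul]
          exact card_nsmul_le_sum _ _ _ fun i hi ↦ (mem_filter.1 hi).2.le
      _ ≤ ∑ i ∈ s, x i :=
          sum_le_sum_of_subset_of_nonneg (filter_subset _ _) fun i _ _ ↦ hx0 i
  have hsplit : ∀ i, (if c < x i then 1 + σ else 1) = 1 + σ * if c < x i then 1 else 0 := by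
    intro i; split_ifs <;> ring
  rw [sum_congr rfl fun i _ ↦ hsplit i, sum_add_distrib, ← mul_sum, sum_boole, sum_const,
    nsmul_one]
  gcongr
  rw [le_div_iff₀ hc]
  linarith

theorem exp_div_exp_le_exp_neg {K m A L : ℝ} (hm : 0 < m) (hL : log 2 ≤ L)
    (hKA : K * (100 * A * L) ≤ m / 2) :
    exp (K * ((exp 1 - 1) * (100 * L) * A) / m) / exp (100 * L * (1 / 30)) ≤ exp (-L) := by
  have he : exp 1 - 1 < 1.72 := by linarith [exp_one_lt_d9]
  have he0 : 0 ≤ exp 1 - 1 := by linarith [add_one_le_exp 1]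
  have hX : K * ((exp 1 - 1) * (100 * L) * A) / m ≤ (exp 1 - 1) / 2 := by
    rw [div_le_iff₀ hm]
    nlinarith
  rw [← exp_sub, exp_le_exp]
  linarith [log_two_gt_d9]

theorem exp_div_one_add_pow_ceil_le {K m A L ρ : ℝ} (hm : 0 < m) (hρ : 1 ≤ ρ) (hL : 0 ≤ L)
    (hKA : K * (100 * A * L) * exp (L / ρ) ≤ m / 2) :
    exp (K * (exp (L / ρ) * (A / (1 / (100 * L)))) / m) /
        (1 + exp (L / ρ)) ^ ⌈ρ - 1 / 20⌉₊ ≤ exp (1 / 2) * exp (L / ρ) * exp (-L) := by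
  have hρ0 : 0 < ρ := by linarith
  have hX : K * (exp (L / ρ) * (A / (1 / (100 * L)))) / m ≤ 1 / 2 := by
    rw [div_div_eq_mul_div, div_one, div_le_iff₀ hm]
    nlinarith
  have hr : exp (L - L / ρ) ≤ (1 + exp (L / ρ)) ^ ⌈ρ - 1 / 20⌉₊ := by
    calc exp (L - L / ρ) = exp ((ρ - 1) * (L / ρ)) := by congr 1; field_simp
      _ ≤ exp (⌈ρ - 1 / 20⌉₊ * (L / ρ)) := by
          gcongr
          linarith [Nat.le_ceil (ρ - 1 / 20)]
      _ = exp (L / ρ) ^ ⌈ρ - 1 / 20⌉₊ := exp_nat_mul _ _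
      _ ≤ (1 + exp (L / ρ)) ^ ⌈ρ - 1 / 20⌉₊ := by gcongr; linarith
  calc _ ≤ exp (1 / 2) / exp (L - L / ρ) := by gcongr
    _ = exp (1 / 2) * exp (L / ρ) * exp (-L) := by
        rw [← exp_sub, ← exp_add, ← exp_add]
        ring_nf

namespace RandomPath

abbrev paths (M K : ℕ) : Finset (Fin K → ℕ) :=
  Fintype.piFinset fun _ ↦ range M

theorem sum_paths_succ {β : Type*} [AddCommMonoid β] (M K : ℕ) (f : (Fin (K + 1) → ℕ) → β) :
    ∑ p ∈ paths M (K + 1), f p = ∑ q ∈ paths M K, ∑ a ∈ range M, f (Fin.snoc q a) :=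
  sum_piFinset_const_snoc _ _

variable (ℓ : List ℕ → ℕ)

def IsAdmissible {K : ℕ} (p : Fin K → ℕ) : Prop :=
  ∀ k : Fin K, p k < ℓ ((List.ofFn p).take k)

/-- The probability that the process, choosing each index uniformly from `range (ℓ h)` given the
history `h`, follows the path `p`. -/
noncomputable def pathProb {K : ℕ} (p : Fin K → ℕ) : ℝ :=
  if IsAdmissible ℓ p then ∏ k : Fin K, (1 : ℝ) / ℓ ((List.ofFn p).take k) else 0

noncomputable def pathProd (g : List ℕ → ℕ → ℝ) {K : ℕ} (p : Fin K → ℕ) : ℝ :=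
  ∏ k : Fin K, g ((List.ofFn p).take k) (p k)

variable {ℓ}

theorem isAdmissible_snoc {K : ℕ} (q : Fin K → ℕ) (a : ℕ) :
    IsAdmissible ℓ (Fin.snoc q a : Fin (K + 1) → ℕ) ↔
      IsAdmissible ℓ q ∧ a < ℓ (List.ofFn q) := by
  simp only [IsAdmissible, Fin.forall_fin_succ', Fin.val_castSucc, Fin.val_last,
    Fin.snoc_castSucc, Fin.snoc_last, List.take_ofFn_snoc, List.take_ofFn_snoc_self]

theorem pathProb_snoc {K : ℕ} (q : Fin K → ℕ) (a : ℕ) :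
    pathProb ℓ (Fin.snoc q a : Fin (K + 1) → ℕ) =
      pathProb ℓ q * if a < ℓ (List.ofFn q) then (1 : ℝ) / ℓ (List.ofFn q) else 0 := by
  simp only [pathProb, isAdmissible_snoc, Fin.prod_univ_castSucc, Fin.val_castSucc, Fin.val_last,
    List.take_ofFn_snoc, List.take_ofFn_snoc_self]
  split_ifs <;> simp_all

theorem pathProd_snoc (g : List ℕ → ℕ → ℝ) {K : ℕ} (q : Fin K → ℕ) (a : ℕ) :
    pathProd g (Fin.snoc q a : Fin (K + 1) → ℕ) = pathProd g q * g (List.ofFn q) a := by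
  simp only [pathProd, Fin.prod_univ_castSucc, Fin.val_castSucc, Fin.val_last,
    Fin.snoc_castSucc, Fin.snoc_last, List.take_ofFn_snoc, List.take_ofFn_snoc_self]

theorem pathProb_nonneg {K : ℕ} (p : Fin K → ℕ) : 0 ≤ pathProb ℓ p := by
  unfold pathProb; split_ifs
  exacts [prod_nonneg fun _ _ ↦ by positivity, le_rfl]

theorem pathProd_nonneg {g : List ℕ → ℕ → ℝ} (hg : ∀ l i, 0 ≤ g l i) {K : ℕ}
    (p : Fin K → ℕ) : 0 ≤ pathProd g p :=
  prod_nonneg fun _ _ ↦ hg _ _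

theorem pathProb_eq_zero_of_notMem_paths {M : ℕ} (hM : ∀ l, ℓ l ≤ M) {K : ℕ}
    {p : Fin K → ℕ} (hp : p ∉ paths M K) : pathProb ℓ p = 0 := by
  refine if_neg fun hadm ↦ hp (Fintype.mem_piFinset.2 fun k ↦ ?_)
  exact mem_range.2 ((hadm k).trans_le (hM _))

theorem sum_pathProb_mul_pathProd_le_pow {M : ℕ} (hM : ∀ l, ℓ l ≤ M)
    {g : List ℕ → ℕ → ℝ} (hg : ∀ l i, 0 ≤ g l i) {B : ℝ} (hB0 : 0 ≤ B)
    (hB : ∀ l, ∑ i ∈ range (ℓ l), g l i ≤ B * ℓ l) (K : ℕ) :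
    ∑ p ∈ paths M K, pathProb ℓ p * pathProd g p ≤ B ^ K := by
  induction K with
  | zero => simp [IsAdmissible, pathProb, pathProd]
  | succ K ih =>
    have hstep : ∀ (q : Fin K → ℕ) (a : ℕ),
        pathProb ℓ (Fin.snoc q a : Fin (K + 1) → ℕ) * pathProd g (Fin.snoc q a) =
          pathProb ℓ q * pathProd g q *
            if a < ℓ (List.ofFn q) then g (List.ofFn q) a / ℓ (List.ofFn q) else 0 := by
      intro q a
      rw [pathProb_snoc, pathProd_snoc]
      split_ifs <;> ring
    calc ∑ p ∈ paths M (K + 1), pathProb ℓ p * pathProd g p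
        = ∑ q ∈ paths M K, pathProb ℓ q * pathProd g q *
            ∑ a ∈ range M, if a < ℓ (List.ofFn q) then g (List.ofFn q) a / ℓ (List.ofFn q)
              else 0 := by
          simp only [sum_paths_succ, hstep, mul_sum]
      _ ≤ ∑ q ∈ paths M K, pathProb ℓ q * pathProd g q * B :=
          sum_le_sum fun q _ ↦ mul_le_mul_of_nonneg_left
            (sum_range_ite_div_le (hM _) hB0 (hB _))
            (mul_nonneg (pathProb_nonneg q) (pathProd_nonneg hg q))
      _ ≤ B ^ (K + 1) := by
          rw [← sum_mul, pow_succ]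
          exact mul_le_mul_of_nonneg_right ih hB0

theorem sum_ite_pathProb_le_div {M : ℕ} (hM : ∀ l, ℓ l ≤ M) {g : List ℕ → ℕ → ℝ}
    (hg : ∀ l i, 0 ≤ g l i) {B : ℝ} (hB0 : 0 ≤ B)
    (hB : ∀ l, ∑ i ∈ range (ℓ l), g l i ≤ B * ℓ l) {θ : ℝ} (hθ : 0 < θ) {K : ℕ}
    (E : (Fin K → ℕ) → Prop) [DecidablePred E]
    (hE : ∀ p, IsAdmissible ℓ p → E p → θ ≤ pathProd g p) :
    ∑ p ∈ paths M K, (if E p then pathProb ℓ p else 0) ≤ B ^ K / θ := by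
  rw [le_div_iff₀ hθ, sum_mul]
  refine (sum_le_sum fun p _ ↦ ?_).trans (sum_pathProb_mul_pathProd_le_pow hM hg hB0 hB K)
  by_cases hp : IsAdmissible ℓ p
  · split_ifs with hEp
    · exact mul_le_mul_of_nonneg_left (hE p hp hEp) (pathProb_nonneg p)
    · rw [zero_mul]
      exact mul_nonneg (pathProb_nonneg p) (pathProd_nonneg hg p)
  · simp [pathProb, hp]

theorem sum_ite_pathProb_le_exp_div {m M : ℕ} (hm : 0 < m) (hℓ : ∀ l, m ≤ ℓ l ∧ ℓ l ≤ M)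
    {g : List ℕ → ℕ → ℝ} (hg : ∀ l i, 0 ≤ g l i) {C : ℝ} (hC0 : 0 ≤ C)
    (hC : ∀ l, ∑ i ∈ range (ℓ l), g l i ≤ ℓ l + C) {θ : ℝ} (hθ : 0 < θ) {K : ℕ}
    (E : (Fin K → ℕ) → Prop) [DecidablePred E]
    (hE : ∀ p, IsAdmissible ℓ p → E p → θ ≤ pathProd g p) :
    ∑ p ∈ paths M K, (if E p then pathProb ℓ p else 0) ≤ exp (K * C / m) / θ := by
  have hm' : (0 : ℝ) < m := Nat.cast_pos.2 hm
  have hB0 : 0 ≤ 1 + C / m := by positivity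
  have hB : ∀ l, ∑ i ∈ range (ℓ l), g l i ≤ (1 + C / m) * ℓ l := fun l ↦ by
    have hml : (m : ℝ) ≤ ℓ l := Nat.cast_le.2 (hℓ l).1
    have : C ≤ C / m * ℓ l := by
      rw [div_mul_eq_mul_div, le_div_iff₀ hm']
      exact mul_le_mul_of_nonneg_left hml hC0
    linarith [hC l]
  refine (sum_ite_pathProb_le_div (fun l ↦ (hℓ l).2) hg hB0 hB hθ E hE).trans ?_
  gcongr
  calc (1 + C / m) ^ K ≤ exp (C / m) ^ K := by
        gcongr
        linarith [add_one_le_exp (C / m)]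
    _ = exp (K * C / m) := by rw [← exp_nat_mul, mul_div_assoc]

theorem sum_ite_pathProb_le_add {M K : ℕ} {E E₁ E₂ : (Fin K → ℕ) → Prop} [DecidablePred E]
    [DecidablePred E₁] [DecidablePred E₂]
    (h : ∀ p, IsAdmissible ℓ p → E p → E₁ p ∨ E₂ p) :
    ∑ p ∈ paths M K, (if E p then pathProb ℓ p else 0) ≤
      ∑ p ∈ paths M K, (if E₁ p then pathProb ℓ p else 0) +
        ∑ p ∈ paths M K, (if E₂ p then pathProb ℓ p else 0) := by
  rw [← sum_add_distrib]
  refine sum_le_sum fun p _ ↦ ?_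
  have hP := pathProb_nonneg (ℓ := ℓ) p
  by_cases hp : IsAdmissible ℓ p
  · by_cases hE : E p
    · rcases h p hp hE with h₁ | h₂
      · rw [if_pos hE, if_pos h₁]; split_ifs <;> linarith
      · rw [if_pos hE, if_pos h₂]; split_ifs <;> linarith
    · rw [if_neg hE]; split_ifs <;> linarith
  · simp [pathProb, hp]

theorem sum_ite_pathProb_le_one {M : ℕ} (hM : ∀ l, ℓ l ≤ M) {K : ℕ}
    (E : (Fin K → ℕ) → Prop) [DecidablePred E] :
    ∑ p ∈ paths M K, (if E p then pathProb ℓ p else 0) ≤ 1 := by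
  simpa using sum_ite_pathProb_le_div hM (g := fun _ _ ↦ 1) (fun _ _ ↦ zero_le_one) zero_le_one
    (fun l ↦ by simp) one_pos E fun p _ _ ↦ by simp [pathProd]

theorem tsum_ite_and_eq_sum_ite_pathProb {M : ℕ} (hM : ∀ l, ℓ l ≤ M) {K : ℕ}
    (E : (Fin K → ℕ) → Prop) [DecidablePred E] :
    ∑' p : Fin K → ℕ,
      (if (∀ k : Fin K, p k < ℓ ((List.ofFn p).take (k : ℕ))) ∧ E p
        then ∏ k : Fin K, (1 : ℝ) / (ℓ ((List.ofFn p).take (k : ℕ)) : ℝ) else 0) =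
      ∑ p ∈ paths M K, if E p then pathProb ℓ p else 0 := by
  have h : ∀ p : Fin K → ℕ,
      (if (∀ k : Fin K, p k < ℓ ((List.ofFn p).take (k : ℕ))) ∧ E p
        then ∏ k : Fin K, (1 : ℝ) / (ℓ ((List.ofFn p).take (k : ℕ)) : ℝ) else 0) =
      if E p then pathProb ℓ p else 0 := fun p ↦ by
    by_cases hE : E p <;> simp [hE, pathProb, IsAdmissible]
  rw [tsum_congr h, tsum_eq_sum fun p hp ↦ by
    rw [pathProb_eq_zero_of_notMem_paths hM hp, ite_self]]

theorem apply_take_le_mul_prod {x : List ℕ → ℕ → ℝ} {v : List ℕ → ℝ}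
    (hx0 : ∀ l i, 0 ≤ x l i) (hv : ∀ l, 0 ≤ v l)
    (hstep : ∀ l, ∀ i < ℓ l, v (l ++ [i]) ≤ v l * (1 + x l i))
    {K : ℕ} {p : Fin K → ℕ} (hp : IsAdmissible ℓ p) {n : ℕ} (hn : n ≤ K) :
    v ((List.ofFn p).take n) ≤ v [] * ∏ k : Fin K, (1 + x ((List.ofFn p).take k) (p k)) := by
  set f : ℕ → ℝ := fun k ↦ if h : k < K then 1 + x ((List.ofFn p).take k) (p ⟨k, h⟩) else 1
  have hf : ∀ k, 1 ≤ f k := fun k ↦ by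
    simp only [f]; split_ifs
    exacts [le_add_of_nonneg_right (hx0 _ _), le_rfl]
  have hgrowth : v ((List.ofFn p).take n) ≤ v [] * ∏ k ∈ range n, f k := by
    refine le_mul_prod_range_of_le_mul (a := fun k ↦ v ((List.ofFn p).take k))
      (fun k _ ↦ zero_le_one.trans (hf k)) fun k hk ↦ ?_
    have hkK : k < K := by omega
    simp only [f, dif_pos hkK, List.take_add_one, List.getElem?_ofFn, Option.toList_some]
    exact hstep _ _ (hp ⟨k, hkK⟩)
  calc v ((List.ofFn p).take n) ≤ v [] * ∏ k ∈ range n, f k := hgrowth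
    _ ≤ v [] * ∏ k ∈ range K, f k := mul_le_mul_of_nonneg_left
        (prod_le_prod_of_subset_of_one_le (range_subset_range.2 hn)
          (fun k _ ↦ zero_le_one.trans (hf k)) fun k _ _ ↦ hf k) (hv [])
    _ = v [] * ∏ k : Fin K, (1 + x ((List.ofFn p).take k) (p k)) := by
        rw [← Fin.prod_univ_eq_prod_range]
        simp only [f, Fin.is_lt, dif_pos, Fin.eta]

theorem apply_take_le_rpow_mul {x : List ℕ → ℕ → ℝ} {v : List ℕ → ℝ} {A c ρ : ℝ}
    (hA : 1 ≤ A) (hc : 0 ≤ c) (hx0 : ∀ l i, 0 ≤ x l i) (hxA : ∀ l, ∑ i ∈ range (ℓ l), x l i ≤ A)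
    (hv : ∀ l, 0 ≤ v l) (hstep : ∀ l, ∀ i < ℓ l, v (l ++ [i]) ≤ v l * (1 + x l i))
    {K : ℕ} {p : Fin K → ℕ} (hp : IsAdmissible ℓ p)
    (hS : ∑ k : Fin K, min (x ((List.ofFn p).take k) (p k)) c ≤ 1 / 30)
    (hJ : (#{k : Fin K | c < x ((List.ofFn p).take k) (p k)} : ℝ) + 1 / 20 ≤ ρ)
    {n : ℕ} (hn : n ≤ K) :
    v ((List.ofFn p).take n) ≤ (2 * A) ^ ρ * v [] := by
  set y : Fin K → ℝ := fun k ↦ x ((List.ofFn p).take k) (p k)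
  have hyA : ∀ k, y k ≤ A := fun k ↦
    (single_le_sum (fun i _ ↦ hx0 _ i) (mem_range.2 (hp k))).trans (hxA _)
  have h2A : 2 ≤ 2 * A := by linarith
  calc v ((List.ofFn p).take n) ≤ v [] * ∏ k, (1 + y k) :=
        apply_take_le_mul_prod hx0 hv hstep hp hn
    _ ≤ v [] * ((1 + A) ^ #{k | c < y k} * exp (∑ k, min (y k) c)) :=
        mul_le_mul_of_nonneg_left
          (prod_one_add_le_pow_mul_exp _ (fun k ↦ hx0 _ _) hyA hc) (hv [])
    _ ≤ v [] * ((2 * A) ^ (#{k | c < y k} : ℝ) * (2 * A) ^ (1 / 20 : ℝ)) := by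
        rw [rpow_natCast]
        gcongr
        · exact hv []
        · linarith
        · exact (exp_le_exp.2 hS).trans (exp_one_div_thirty_le_rpow h2A)
    _ ≤ (2 * A) ^ ρ * v [] := by
        rw [← rpow_add (by linarith), mul_comm]
        gcongr
        · exact hv []
        · linarith

theorem sum_ite_pathProb_exceeds_le_add {M : ℕ} {x : List ℕ → ℕ → ℝ} {v : List ℕ → ℝ}
    {A c : ℝ} (hA : 1 ≤ A) (hc : 0 ≤ c) (hx0 : ∀ l i, 0 ≤ x l i)
    (hxA : ∀ l, ∑ i ∈ range (ℓ l), x l i ≤ A) (hv : ∀ l, 0 ≤ v l)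
    (hstep : ∀ l, ∀ i < ℓ l, v (l ++ [i]) ≤ v l * (1 + x l i)) (ρ : ℝ) (K : ℕ) :
    ∑ p ∈ paths M K,
        (if ∃ n ≤ K, (2 * A) ^ ρ * v [] < v ((List.ofFn p).take n) then pathProb ℓ p else 0) ≤
      ∑ p ∈ paths M K,
          (if 1 / 30 < ∑ k : Fin K, min (x ((List.ofFn p).take k) (p k)) c
            then pathProb ℓ p else 0) +
        ∑ p ∈ paths M K,
          (if ⌈ρ - 1 / 20⌉₊ ≤ #{k : Fin K | c < x ((List.ofFn p).take k) (p k)}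
            then pathProb ℓ p else 0) := by
  refine sum_ite_pathProb_le_add fun p hp ⟨n, hn, hlt⟩ ↦ ?_
  by_contra! h
  refine hlt.not_ge (apply_take_le_rpow_mul hA hc hx0 hxA hv hstep hp h.1 ?_ hn)
  linarith [Nat.lt_ceil.1 h.2]

variable {m M : ℕ} {x : List ℕ → ℕ → ℝ} {A : ℝ}

theorem sum_ite_pathProb_sum_min_gt_le (hm : 0 < m) (hℓ : ∀ l, m ≤ ℓ l ∧ ℓ l ≤ M)
    (hx0 : ∀ l i, 0 ≤ x l i) (hxA : ∀ l, ∑ i ∈ range (ℓ l), x l i ≤ A) (hA : 0 ≤ A)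
    {θ c : ℝ} (hθ : 0 < θ) (hc : 0 ≤ c) (hθc : θ * c ≤ 1) (t : ℝ) (K : ℕ) :
    ∑ p ∈ paths M K,
        (if t < ∑ k : Fin K, min (x ((List.ofFn p).take k) (p k)) c then pathProb ℓ p else 0) ≤
      exp (K * ((exp 1 - 1) * θ * A) / m) / exp (θ * t) := by
  have he : 0 ≤ exp 1 - 1 := by linarith [add_one_le_exp 1]
  refine sum_ite_pathProb_le_exp_div hm hℓ (g := fun l i ↦ exp (θ * min (x l i) c))
    (fun _ _ ↦ (exp_pos _).le) (by positivity) (fun l ↦ ?_) (exp_pos _) _ fun p _ hp ↦ ?_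
  · refine (sum_exp_mul_min_le _ (hx0 l) hθ.le hc hθc).trans ?_
    rw [card_range]
    gcongr
    exact hxA l
  · rw [pathProd, ← exp_sum, ← mul_sum]
    gcongr

theorem sum_ite_pathProb_card_ge_le (hm : 0 < m) (hℓ : ∀ l, m ≤ ℓ l ∧ ℓ l ≤ M)
    (hx0 : ∀ l i, 0 ≤ x l i) (hxA : ∀ l, ∑ i ∈ range (ℓ l), x l i ≤ A) (hA : 0 ≤ A)
    {c σ : ℝ} (hc : 0 < c) (hσ : 0 ≤ σ) (r K : ℕ) :
    ∑ p ∈ paths M K,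
        (if r ≤ #{k : Fin K | c < x ((List.ofFn p).take k) (p k)} then pathProb ℓ p else 0) ≤
      exp (K * (σ * (A / c)) / m) / (1 + σ) ^ r := by
  refine sum_ite_pathProb_le_exp_div hm hℓ (g := fun l i ↦ if c < x l i then 1 + σ else 1)
    (C := σ * (A / c))
    (fun _ _ ↦ by positivity) (by positivity) (fun l ↦ ?_)
    (pow_pos (by linarith : (0 : ℝ) < 1 + σ) r) _ fun p _ hp ↦ ?_
  · refine (sum_ite_lt_le _ (hx0 l) hc hσ).trans ?_
    rw [card_range]
    gcongr
    exact hxA l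
  · rw [pathProd, prod_ite, prod_const, prod_const_one, mul_one]
    exact pow_le_pow_right₀ (by linarith) hp

theorem sum_ite_pathProb_exceeds_le {K : ℕ} (hK : 0 < K) (hm : 0 < m)
    (hℓ : ∀ l, m ≤ ℓ l ∧ ℓ l ≤ M) (hx0 : ∀ l i, 0 ≤ x l i)
    (hxA : ∀ l, ∑ i ∈ range (ℓ l), x l i ≤ A) {v : List ℕ → ℝ} (hv : ∀ l, 0 ≤ v l)
    (hstep : ∀ l, ∀ i < ℓ l, v (l ++ [i]) ≤ v l * (1 + x l i))
    {ρ L : ℝ} (hA : 1 ≤ A) (hρ : 1 ≤ ρ) (hL : log 2 ≤ L)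
    (hKm : K * (200 * A * L) ≤ m * exp (-(L / ρ))) :
    ∑ p ∈ paths M K,
        (if ∃ n ≤ K, (2 * A) ^ ρ * v [] < v ((List.ofFn p).take n) then pathProb ℓ p else 0) ≤
      2 * (M ^ 2 * exp (-L)) := by
  have hL0 : 0 < L := (log_pos one_lt_two).trans_le hL
  have hK1 : (1 : ℝ) ≤ K := Nat.one_le_cast.2 hK
  have hmKA : K * (200 * A * L) * exp (L / ρ) ≤ m := by
    rwa [← le_div_iff₀ (exp_pos _), div_eq_mul_inv, ← exp_neg]
  have hmM : (m : ℝ) ≤ M := Nat.cast_le.2 ((hℓ []).1.trans (hℓ []).2)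
  have hM1 : (1 : ℝ) ≤ M ^ 2 :=
    one_le_pow₀ (by exact_mod_cast hm.trans_le (Nat.cast_le.1 hmM))
  have hM : exp (1 / 2) * exp (L / ρ) ≤ M ^ 2 := by
    have h200 : exp (1 / 2) ≤ 200 * A * L := by
      have : exp (1 / 2) < 3 := (exp_lt_exp.2 (by norm_num)).trans exp_one_lt_three
      nlinarith [log_two_gt_d9]
    have : 200 * A * L ≤ K * (200 * A * L) := le_mul_of_one_le_left (by positivity) hK1
    have : (M : ℝ) ≤ M ^ 2 := by nlinarith
    nlinarith [exp_pos (L / ρ)]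
  have hexp : 1 ≤ exp (L / ρ) := one_le_exp (by positivity)
  refine (sum_ite_pathProb_exceeds_le_add hA (by positivity : 0 ≤ 1 / (100 * L)) hx0 hxA hv
    hstep ρ K).trans <| (add_le_add
      (sum_ite_pathProb_sum_min_gt_le hm hℓ hx0 hxA (by linarith)
        (by positivity : 0 < 100 * L) (by positivity) (by field_simp; rfl) _ K)
      (sum_ite_pathProb_card_ge_le hm hℓ hx0 hxA (by linarith) (by positivity)
        (by positivity : 0 ≤ exp (L / ρ)) _ K)).trans ?_
  calc _ ≤ exp (-L) + exp (1 / 2) * exp (L / ρ) * exp (-L) :=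
        add_le_add (exp_div_exp_le_exp_neg (Nat.cast_pos.2 hm) hL (by nlinarith))
          (exp_div_one_add_pow_ceil_le (Nat.cast_pos.2 hm) hρ hL0.le (by linarith))
    _ ≤ 2 * (M ^ 2 * exp (-L)) := by
        nlinarith [mul_le_mul_of_nonneg_right hM (exp_pos (-L)).le,
          mul_le_mul_of_nonneg_right hM1 (exp_pos (-L)).le]

end RandomPath

theorem mul_le_mul_exp_of_le_mul_min {K m a γ η ρ τ M : ℝ} (hK0 : 0 ≤ K) (hm : 0 ≤ m)
    (hγ : 1 ≤ γ) (hη : 1 ≤ η) (hτ : 0 < τ) (hM : 0 < M) (hL : 0 < log (M ^ 2 / τ))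
    (hK : K ≤ m * min a (1 / (200 * η * γ ^ 2 * log (M ^ 2 / τ)) * (τ / M ^ 2) ^ (1 / ρ))) :
    K * (200 * (γ * η) * log (M ^ 2 / τ)) ≤ m * exp (-(log (M ^ 2 / τ) / ρ)) := by
  have hrpow : (τ / M ^ 2) ^ (1 / ρ) = exp (-(log (M ^ 2 / τ) / ρ)) := by
    rw [rpow_def_of_pos (by positivity), ← inv_div, log_inv, neg_mul, mul_one_div]
  have h := hK.trans (mul_le_mul_of_nonneg_left (min_le_right _ _) hm)
  rw [hrpow, ← mul_assoc, mul_one_div, div_mul_eq_mul_div, le_div_iff₀ (by positivity)] at h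
  refine le_trans (mul_le_mul_of_nonneg_left ?_ ?_) h
  · nlinarith [mul_le_mul_of_nonneg_left hγ (by positivity : 0 ≤ γ * η * log (M ^ 2 / τ))]
  · exact hK0

open RandomPath

theorem random_update_multiplicative_control_general
    (γ η ρ τ : ℝ) (hγ : 1 ≤ γ) (hη : 1 ≤ η) (hρ : 1 ≤ ρ)
    (hτ0 : 0 < τ)
    (m0 M0 : ℕ) (hm0 : 1 ≤ m0)
    (ℓ : List ℕ → ℕ) (u w : List ℕ → ℕ → ℝ) (v : List ℕ → ℝ)
    (hℓ : ∀ l, m0 ≤ ℓ l ∧ ℓ l ≤ M0)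
    (hv : ∀ l, 0 < v l)
    (hu : ∀ l i, 0 ≤ u l i) (hw : ∀ l i, 0 ≤ w l i)
    (hsum : ∀ l, ∑ i ∈ Finset.range (ℓ l), u l i * w l i ≤ η * v l)
    (hstep : ∀ l, ∀ i < ℓ l, v (l ++ [i]) ≤ v l + γ * u l i * w l i)
    (K : ℕ)
    (hK : (K : ℝ) ≤ (m0 : ℝ) *
        min (1 / (Real.log ((M0 : ℝ) ^ 2 / τ) * η ^ 2 * γ ^ 2))
            ((1 / (200 * η * γ ^ 2 * Real.log ((M0 : ℝ) ^ 2 / τ)))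
              * (τ / (M0 : ℝ) ^ 2) ^ ((1 : ℝ) / ρ))) :
    ∑' p : Fin K → ℕ,
      (if (∀ k : Fin K, p k < ℓ ((List.ofFn p).take (k : ℕ)))
          ∧ (∃ k' ≤ K, (2 * γ * η) ^ ρ * v [] < v ((List.ofFn p).take k'))
        then ∏ k : Fin K, (1 : ℝ) / (ℓ ((List.ofFn p).take (k : ℕ)) : ℝ)
        else 0)
      ≤ 2 * τ := by
  have hA : 1 ≤ γ * η := one_le_mul_of_one_le_of_one_le hγ hη
  rw [tsum_ite_and_eq_sum_ite_pathProb (fun l ↦ (hℓ l).2), mul_assoc 2 γ η]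
  obtain rfl | hK0 := K.eq_zero_or_pos
  · refine (sum_eq_zero fun p _ ↦ if_neg ?_).trans_le (by linarith)
    rintro ⟨n, hn, h⟩
    rw [Nat.le_zero.1 hn, List.take_zero] at h
    nlinarith [hv [], one_le_rpow (by linarith : (1 : ℝ) ≤ 2 * (γ * η)) (by linarith : 0 ≤ ρ)]
  obtain hτ | hτ := le_or_gt (1 / 2) τ
  · exact (sum_ite_pathProb_le_one (fun l ↦ (hℓ l).2) _).trans (by linarith)
  have hM0 : (1 : ℝ) ≤ M0 := by exact_mod_cast hm0.trans ((hℓ []).1.trans (hℓ []).2)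
  have hL : log 2 ≤ log ((M0 : ℝ) ^ 2 / τ) :=
    log_le_log two_pos (by rw [le_div_iff₀ hτ0]; nlinarith)
  have key := sum_ite_pathProb_exceeds_le (x := fun l i ↦ γ * u l i * w l i / v l)
    hK0 hm0 hℓ
    (fun l i ↦ div_nonneg (mul_nonneg (mul_nonneg (by linarith) (hu l i)) (hw l i)) (hv l).le)
    (fun l ↦ ?_) (fun l ↦ (hv l).le) (fun l i hi ↦ ?_) hA hρ hL
    (mul_le_mul_exp_of_le_mul_min (Nat.cast_nonneg _) (Nat.cast_nonneg _) hγ hη hτ0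
      (by positivity) ((log_pos one_lt_two).trans_le hL) hK)
  · rwa [exp_neg, exp_log (by positivity), inv_div, mul_div_cancel₀ _ (by positivity)] at key
  · rw [← sum_div, div_le_iff₀ (hv l)]
    simp_rw [mul_assoc, ← mul_sum]
    nlinarith [hsum l]
  · rw [mul_add, mul_one, mul_div_cancel₀ _ (hv l).ne']
    exact hstep l i hi

/-- **Multiplicative control of a randomly (adaptively) updated sequence.**
Histories are encoded as lists of chosen indices; the adaptive data
`ℓ, u, w, v` are arbitrary functions of the history.  A path `p : Fin K → ℕ` of
index choices is valid when each choice is below the current `ℓ`, and its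
probability is the product of `1/ℓ` along the way.  The probability that the
value `v` ever exceeds `(2γη)^ρ v(start)` within `K` steps,
`K ≤ m₀ · min(1/((log(M₀²/τ)) η² γ²), (1/(200 η γ² log(M₀²/τ))) (τ/M₀²)^{1/ρ})`,
is at most `2τ`. -/
theorem random_update_multiplicative_control
    (γ η ρ τ : ℝ) (hγ : 1 ≤ γ) (hη : 1 ≤ η) (hρ : 1 ≤ ρ)
    (hτ0 : 0 < τ) (hτ1 : τ < 1)
    (m0 M0 : ℕ) (hm0 : 1 ≤ m0)
    (ℓ : List ℕ → ℕ) (u w : List ℕ → ℕ → ℝ) (v : List ℕ → ℝ)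
    (hℓ : ∀ l, m0 ≤ ℓ l ∧ ℓ l ≤ M0)
    (hv : ∀ l, 0 < v l)
    (hu : ∀ l i, 0 ≤ u l i) (hw : ∀ l i, 0 ≤ w l i)
    (hsum : ∀ l, ∑ i ∈ Finset.range (ℓ l), u l i * w l i ≤ η * v l)
    (hstep : ∀ l, ∀ i < ℓ l, v (l ++ [i]) ≤ v l + γ * u l i * w l i)
    (K : ℕ)
    (hK : (K : ℝ) ≤ (m0 : ℝ) *
        min (1 / (Real.log ((M0 : ℝ) ^ 2 / τ) * η ^ 2 * γ ^ 2))
            ((1 / (200 * η * γ ^ 2 * Real.log ((M0 : ℝ) ^ 2 / τ)))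
              * (τ / (M0 : ℝ) ^ 2) ^ ((1 : ℝ) / ρ))) :
    ∑' p : Fin K → ℕ,
      (if (∀ k : Fin K, p k < ℓ ((List.ofFn p).take (k : ℕ)))
          ∧ (∃ k' ≤ K, (2 * γ * η) ^ ρ * v [] < v ((List.ofFn p).take k'))
        then ∏ k : Fin K, (1 : ℝ) / (ℓ ((List.ofFn p).take (k : ℕ)) : ℝ)
        else 0)
      ≤ 2 * τ :=
  random_update_multiplicative_control_general γ η ρ τ hγ hη hρ hτ0 m0 M0 hm0 ℓ u w v hℓ hv hu hw
    hsum hstep K hK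
end
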